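/- Let s ∈ C¹_FF([0,1]) with ‖s'‖₁ > 0 and let t₀, t₁, …, t_n ∈ C¹_FF([0,1]) with ‖t_j'‖₁ > 0 for all j, such that s ∼ t₀ (i.e., s∘g₁ = t₀∘g₂ for some g₁,g₂ ∈ 𝒢). Then d_T(s,t₀) = 0 = min_{0 ≤ j ≤ n} d_T(s,t_j); i.e., t₀ attains the minimum of d_T(s,·) over the training samples, so the class of s belongs to the classes of the minimizers of d_T(s,·). -/

import Mathlib

open Set MeasureTheory

/-- `g` is piecewise-C¹ on `[0,1]`: continuous, differentiable except at finitely many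
points, with derivative continuous off that finite exceptional set. -/
def PiecewiseC1 (g : ℝ → ℝ) : Prop :=
  ContinuousOn g (Set.Icc 0 1) ∧
  ∃ S : Finset ℝ,
    (∀ x ∈ Set.Icc (0:ℝ) 1 \ S, DifferentiableAt ℝ g x) ∧
    ContinuousOn (deriv g) (Set.Icc 0 1 \ S)

/-- `g` has finitely many flat regions: the zero set of `g'` in `[0,1]` has finitely many
connected components. -/
def FiniteFlats (g : ℝ → ℝ) : Prop :=
  {C : Set ℝ | ∃ x ∈ {y ∈ Set.Icc (0:ℝ) 1 | deriv g y = 0},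
      C = connectedComponentIn {y ∈ Set.Icc (0:ℝ) 1 | deriv g y = 0} x}.Finite

/-- The class C¹_FF([0,1]). -/
def C1FF (g : ℝ → ℝ) : Prop := PiecewiseC1 g ∧ FiniteFlats g

/-- The set 𝒢 of admissible time warps: C¹_FF, non-decreasing on `[0,1]`,
with `g 0 = 0` and `g 1 = 1`. -/
def InG (g : ℝ → ℝ) : Prop :=
  C1FF g ∧ MonotoneOn g (Set.Icc 0 1) ∧ g 0 = 0 ∧ g 1 = 1

/-- The warping relation: `s ∼ φ` iff `s ∘ g₁ = φ ∘ g₂` on `[0,1]` for some `g₁, g₂ ∈ 𝒢`. -/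
def WarpRel (s φ : ℝ → ℝ) : Prop :=
  ∃ g₁ g₂ : ℝ → ℝ, InG g₁ ∧ InG g₂ ∧ ∀ t ∈ Set.Icc (0:ℝ) 1, s (g₁ t) = φ (g₂ t)

/-- Generalized inverse of `F : [a,b] → ℝ` : `F†(y) = inf {x ∈ [a,b] | F x > y}`,
with `inf ∅ = b` (implemented by adjoining `{b}`). -/
noncomputable def genInv (a b : ℝ) (F : ℝ → ℝ) (y : ℝ) : ℝ :=
  sInf ({x ∈ Set.Icc a b | y < F x} ∪ {b})

/-- `‖f'‖₁ = ∫₀¹ |f'(x)| dx`. -/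
noncomputable def normD1 (f : ℝ → ℝ) : ℝ := ∫ x in (0:ℝ)..1, |deriv f x|

/-- CDF of the normalized density `|f'| / ‖f'‖₁`. -/
noncomputable def cdfOf (f : ℝ → ℝ) (t : ℝ) : ℝ :=
  (normD1 f)⁻¹ * ∫ x in (0:ℝ)..t, |deriv f x|

/-- The optimal transport map `g = F_φ† ∘ F_s` between `|s'|/‖s'‖₁` and `|φ'|/‖φ'‖₁`. -/
noncomputable def transportMap (s φ : ℝ → ℝ) (x : ℝ) : ℝ :=
  genInv 0 1 (cdfOf φ) (cdfOf s x)

/-- The transport divergence `d_T`. -/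
noncomputable def dT (s φ : ℝ → ℝ) : ℝ :=
  Real.sqrt (∫ x in (0:ℝ)..1,
    |s x - φ (transportMap s φ x)| ^ 2 * Real.sqrt (deriv (transportMap s φ) x))

/-!
If `s ∘ g₁ = φ ∘ g₂`, the chain rule gives `|s'(g₁ u)| g₁'(u) = |φ'(g₂ u)| g₂'(u)` wherever
everything is differentiable, so `h = F_s ∘ g₁ - F_φ ∘ g₂` has a derivative with the fixed sign of
`1/‖s'‖₁ - 1/‖φ'‖₁` off finitely many points (where a warp is locally flat, both terms are locally
constant). As `h 0 = h 1 = 0`, `h` vanishes. Hence for `x = g₁ u` the transport map sends `x` to a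
point `T ≥ g₂ u` with `F_φ T = F_φ (g₂ u)`, so `φ' = 0` a.e. on `[g₂ u, T]` and
`φ T = φ (g₂ u) = s x`: the integrand of `d_T(s, φ)` vanishes identically.
-/

open Topology Filter

theorem monotoneOn_Icc_of_hasDerivAt_nonneg_off_finset {f : ℝ → ℝ} {a b : ℝ} (K : Finset ℝ)
    (hf : ContinuousOn f (Icc a b))
    (hd : ∀ x ∈ Ioo a b \ (K : Set ℝ), ∃ d, 0 ≤ d ∧ HasDerivAt f d x) :
    MonotoneOn f (Icc a b) := by
  induction K using Finset.induction_on generalizing a b with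
  | empty =>
    refine monotoneOn_of_deriv_nonneg (convex_Icc a b) hf (fun x hx => ?_) (fun x hx => ?_) <;>
      rw [interior_Icc] at hx <;> obtain ⟨d, hd0, hdx⟩ := hd x ⟨hx, by simp⟩
    · exact hdx.differentiableAt.differentiableWithinAt
    · rwa [hdx.deriv]
  | insert c K _ ih =>
    have restrict : ∀ {l r}, Ioo l r ⊆ Ioo a b → c ∉ Ioo l r →
        ∀ x ∈ Ioo l r \ (K : Set ℝ), ∃ d, 0 ≤ d ∧ HasDerivAt f d x :=
      fun hsub hc x hx => hd x ⟨hsub hx.1, by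
        simpa [not_or] using ⟨fun h => hc (h ▸ hx.1), hx.2⟩⟩
    by_cases hc : c ∈ Ioo a b
    · have hleft := ih (hf.mono (Icc_subset_Icc_right hc.2.le))
        (restrict (Ioo_subset_Ioo_right hc.2.le) (by simp))
      have hright := ih (hf.mono (Icc_subset_Icc_left hc.1.le))
        (restrict (Ioo_subset_Ioo_left hc.1.le) (by simp))
      rw [← Icc_union_Icc_eq_Icc hc.1.le hc.2.le]
      exact hleft.union_right hright (isGreatest_Icc hc.1.le) (isLeast_Icc hc.2.le)
    · exact ih hf (restrict subset_rfl hc)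

theorem eqOn_Icc_of_hasDerivAt_mul_off_finset {f : ℝ → ℝ} {a b c : ℝ} (K : Finset ℝ)
    (hf : ContinuousOn f (Icc a b)) (hfab : f a = f b)
    (hd : ∀ x ∈ Ioo a b \ (K : Set ℝ), ∃ d, 0 ≤ d ∧ HasDerivAt f (d * c) x) :
    ∀ x ∈ Icc a b, f x = f a := by
  intro x hx
  have ha : a ∈ Icc a b := left_mem_Icc.2 (hx.1.trans hx.2)
  have hb : b ∈ Icc a b := right_mem_Icc.2 (hx.1.trans hx.2)
  rcases le_total 0 c with hc | hc
  · have hmono := monotoneOn_Icc_of_hasDerivAt_nonneg_off_finset K hf fun y hy =>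
      let ⟨d, hd0, hdy⟩ := hd y hy
      ⟨d * c, mul_nonneg hd0 hc, hdy⟩
    linarith [hmono ha hx hx.1, hmono hx hb hx.2]
  · have hmono := monotoneOn_Icc_of_hasDerivAt_nonneg_off_finset K hf.neg fun y hy =>
      let ⟨d, hd0, hdy⟩ := hd y hy
      ⟨d * -c, mul_nonneg hd0 (neg_nonneg.2 hc), by simpa only [mul_neg] using hdy.neg⟩
    have h₁ : -f a ≤ -f x := hmono ha hx hx.1
    have h₂ : -f x ≤ -f b := hmono hx hb hx.2
    linarith

theorem genInv_apply_self {F : ℝ → ℝ} {a b y : ℝ} (hF : MonotoneOn F (Icc a b))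
    (hc : ContinuousOn F (Icc a b)) (hy : y ∈ Icc a b) :
    genInv a b F (F y) ∈ Icc y b ∧ F (genInv a b F (F y)) = F y := by
  set E := {x ∈ Icc a b | F y < F x} ∪ {b}
  set T := genInv a b F (F y)
  have hT : T = sInf E := rfl
  have hlow : ∀ z ∈ E, y ≤ z := by
    rintro z (⟨hz, hFz⟩ | rfl)
    · exact le_of_not_gt fun hzy => hFz.not_ge (hF hz hy hzy.le)
    · exact hy.2
  have hbdd : BddBelow E := ⟨y, hlow⟩
  have hTmem : T ∈ Icc y b :=
    ⟨hT ▸ le_csInf ⟨b, Or.inr rfl⟩ hlow, hT ▸ csInf_le hbdd (Or.inr rfl)⟩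
  refine ⟨hTmem, le_antisymm ?_ (hF hy ⟨hy.1.trans hTmem.1, hTmem.2⟩ hTmem.1)⟩
  -- `F ≤ F y` holds on `[y, T)` by minimality of `T`, and passes to `T` by continuity.
  have hclosed : IsClosed (Icc a b ∩ F ⁻¹' Iic (F y)) :=
    hc.preimage_isClosed_of_isClosed isClosed_Icc isClosed_Iic
  have hsub : Ico y T ⊆ Icc a b ∩ F ⁻¹' Iic (F y) := fun z hz =>
    have hzI : z ∈ Icc a b := ⟨hy.1.trans hz.1, hz.2.le.trans hTmem.2⟩
    ⟨hzI, not_lt.1 fun h => (hT ▸ csInf_le hbdd (Or.inl ⟨hzI, h⟩)).not_gt hz.2⟩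
  rcases hTmem.1.eq_or_lt with hyT | hyT
  · rw [← hyT]
  · refine (hclosed.closure_subset_iff.2 hsub ?_).2
    rw [closure_Ico hyT.ne]
    exact ⟨hTmem.1, le_rfl⟩

theorem eq_of_integral_abs_deriv_eq_zero {f : ℝ → ℝ} {a b : ℝ} {S : Set ℝ} (hab : a ≤ b)
    (hS : S.Countable) (hc : ContinuousOn f (Icc a b))
    (hd : ∀ x ∈ Ioo a b \ S, DifferentiableAt ℝ f x)
    (hI : IntervalIntegrable (fun x => |deriv f x|) volume a b)
    (h0 : ∫ x in a..b, |deriv f x| = 0) : f b = f a := by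
  have hI' : IntervalIntegrable (deriv f) volume a b :=
    hI.mono_fun' (measurable_deriv f).aestronglyMeasurable (ae_of_all _ fun _ => le_rfl)
  have hzero : ∀ᵐ x ∂volume.restrict (Ioc a b), |deriv f x| = 0 :=
    (intervalIntegral.integral_eq_zero_iff_of_le_of_nonneg_ae hab
      (ae_of_all _ fun _ => abs_nonneg _) hI).1 h0
  rw [← sub_eq_zero, ← integral_eq_of_hasDerivAt_off_countable_of_le f (deriv f) hab hS hc
    (fun x hx => (hd x hx).hasDerivAt) hI']
  refine intervalIntegral.integral_zero_ae ?_
  rw [uIoc_of_le hab]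
  filter_upwards [(ae_restrict_iff' measurableSet_Ioc).1 hzero] with x hx hxI
  exact abs_eq_zero.1 (hx hxI)

theorem intervalIntegrable_abs_deriv_of_normD1_pos {f : ℝ → ℝ} (h : 0 < normD1 f) :
    IntervalIntegrable (fun x => |deriv f x|) volume 0 1 := by
  by_contra hI
  rw [normD1, intervalIntegral.integral_undef hI] at h
  exact h.false

section CDF

variable {f : ℝ → ℝ} (hI : IntervalIntegrable (fun x => |deriv f x|) volume 0 1)
include hI

theorem intervalIntegrable_abs_deriv_of_mem_Icc {a b : ℝ} (ha : a ∈ Icc (0:ℝ) 1)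
    (hb : b ∈ Icc (0:ℝ) 1) : IntervalIntegrable (fun x => |deriv f x|) volume a b :=
  hI.mono_set (by rw [uIcc_of_le zero_le_one]; exact uIcc_subset_Icc ha hb)

theorem cdfOf_sub_cdfOf {a b : ℝ} (ha : a ∈ Icc (0:ℝ) 1) (hb : b ∈ Icc (0:ℝ) 1) :
    cdfOf f b - cdfOf f a = (normD1 f)⁻¹ * ∫ x in a..b, |deriv f x| := by
  have h0 : (0:ℝ) ∈ Icc (0:ℝ) 1 := left_mem_Icc.2 zero_le_one
  rw [cdfOf, cdfOf, ← mul_sub, intervalIntegral.integral_interval_sub_left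
    (intervalIntegrable_abs_deriv_of_mem_Icc hI h0 hb)
    (intervalIntegrable_abs_deriv_of_mem_Icc hI h0 ha)]

theorem cdfOf_monotoneOn : MonotoneOn (cdfOf f) (Icc 0 1) := by
  intro a ha b hb hab
  have hnorm : 0 ≤ (normD1 f)⁻¹ :=
    inv_nonneg.2 (intervalIntegral.integral_nonneg zero_le_one fun _ _ => abs_nonneg _)
  have hint : 0 ≤ ∫ x in a..b, |deriv f x| :=
    intervalIntegral.integral_nonneg hab fun x _ => abs_nonneg (deriv f x)
  linarith [cdfOf_sub_cdfOf hI ha hb, mul_nonneg hnorm hint]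

theorem cdfOf_continuousOn : ContinuousOn (cdfOf f) (Icc 0 1) := by
  have h := intervalIntegral.continuousOn_primitive_interval' hI left_mem_uIcc
  rw [uIcc_of_le zero_le_one] at h
  exact continuousOn_const.mul h

theorem hasDerivAt_cdfOf {p : ℝ} (hp : p ∈ Icc (0:ℝ) 1) (hc : ContinuousAt (deriv f) p) :
    HasDerivAt (cdfOf f) ((normD1 f)⁻¹ * |deriv f p|) p :=
  (intervalIntegral.integral_hasDerivAt_right
    (intervalIntegrable_abs_deriv_of_mem_Icc hI (left_mem_Icc.2 zero_le_one) hp)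
    (measurable_deriv f).abs.stronglyMeasurable.stronglyMeasurableAtFilter hc.abs).const_mul _

theorem cdfOf_eq_of_eqOn_uIcc {a b : ℝ} (ha : a ∈ Icc (0:ℝ) 1) (hb : b ∈ Icc (0:ℝ) 1)
    (hconst : ∀ w ∈ uIcc a b, f w = f a) : cdfOf f b = cdfOf f a := by
  have hderiv : ∀ w ∈ Ioo (min a b) (max a b), deriv f w = 0 := fun w hw => by
    have hev : f =ᶠ[𝓝 w] fun _ => f a := by
      filter_upwards [Ioo_mem_nhds hw.1 hw.2] with z hz using hconst z (Ioo_subset_Icc_self hz)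
    rw [hev.deriv_eq, deriv_const]
  have hint : ∫ x in a..b, |deriv f x| = 0 := by
    refine intervalIntegral.integral_zero_ae ?_
    filter_upwards [(countable_singleton (max a b)).ae_notMem volume] with x hx hxI
    rw [hderiv x ⟨hxI.1, lt_of_le_of_ne hxI.2 hx⟩, abs_zero]
  rw [← sub_eq_zero, cdfOf_sub_cdfOf hI ha hb, hint, mul_zero]

end CDF

theorem cdfOf_zero (f : ℝ → ℝ) : cdfOf f 0 = 0 := by simp [cdfOf]

theorem cdfOf_one {f : ℝ → ℝ} (h : 0 < normD1 f) : cdfOf f 1 = 1 := by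
  rw [cdfOf, ← normD1, inv_mul_cancel₀ h.ne']

theorem InG.mapsTo {g : ℝ → ℝ} (hg : InG g) : MapsTo g (Icc (0:ℝ) 1) (Icc (0:ℝ) 1) := by
  obtain ⟨-, hm, h0, h1⟩ := hg
  intro v hv
  exact ⟨h0 ▸ hm (left_mem_Icc.2 zero_le_one) hv hv.1,
    h1 ▸ hm hv (right_mem_Icc.2 zero_le_one) hv.2⟩

theorem MonotoneOn.mem_interior_levelSet {g : ℝ → ℝ} {a b u : ℝ} (hg : MonotoneOn g (Icc a b))
    (hu : u ∈ Icc a b) (hinf : u ≠ sInf {v ∈ Icc a b | g v = g u})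
    (hsup : u ≠ sSup {v ∈ Icc a b | g v = g u}) :
    u ∈ interior {v ∈ Icc a b | g v = g u} := by
  set P := {v ∈ Icc a b | g v = g u}
  have hne : P.Nonempty := ⟨u, hu, rfl⟩
  have hbdd_below : BddBelow P := ⟨a, fun v hv => hv.1.1⟩
  have hbdd_above : BddAbove P := ⟨b, fun v hv => hv.1.2⟩
  have hinf_lt : sInf P < u := (csInf_le hbdd_below ⟨hu, rfl⟩).lt_of_ne hinf.symm
  have hlt_sup : u < sSup P := (le_csSup hbdd_above ⟨hu, rfl⟩).lt_of_ne hsup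
  refine mem_interior.2 ⟨Ioo (sInf P) (sSup P), fun v hv => ?_, isOpen_Ioo, hinf_lt, hlt_sup⟩
  obtain ⟨v₁, ⟨hv₁I, hv₁u⟩, hv₁⟩ := exists_lt_of_csInf_lt hne hv.1
  obtain ⟨v₂, ⟨hv₂I, hv₂u⟩, hv₂⟩ := exists_lt_of_lt_csSup hne hv.2
  have hvI : v ∈ Icc a b := ⟨hv₁I.1.trans hv₁.le, hv₂.le.trans hv₂I.2⟩
  exact ⟨hvI, le_antisymm (hv₂u ▸ hg hvI hv₂I hv₂.le) (hv₁u ▸ hg hv₁I hvI hv₁.le)⟩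

noncomputable def levelSetEndpoints (g : ℝ → ℝ) (P : Finset ℝ) : Finset ℝ :=
  P.image (fun p => sInf {v ∈ Icc (0:ℝ) 1 | g v = p}) ∪
    P.image (fun p => sSup {v ∈ Icc (0:ℝ) 1 | g v = p})

theorem apply_mem_Ioo_sdiff_of_notMem_interior_levelSet {g : ℝ → ℝ} {S : Finset ℝ} {u : ℝ}
    (hg : MonotoneOn g (Icc 0 1)) (hmap : MapsTo g (Icc (0:ℝ) 1) (Icc (0:ℝ) 1))
    (hu : u ∈ Icc (0:ℝ) 1) (hint : u ∉ interior {v ∈ Icc (0:ℝ) 1 | g v = g u})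
    (hB : u ∉ levelSetEndpoints g (S ∪ {0, 1})) : g u ∈ Ioo (0:ℝ) 1 \ (S : Set ℝ) := by
  by_contra hgu
  have hP : g u ∈ S ∪ {0, 1} := by
    obtain ⟨h0, h1⟩ := hmap hu
    simp only [Set.mem_sdiff, mem_Ioo, Finset.mem_coe, not_and_or, not_lt, not_not] at hgu
    simp only [Finset.mem_union, Finset.mem_insert, Finset.mem_singleton]
    rcases hgu with (h | h) | h
    · exact Or.inr (Or.inl (le_antisymm h h0))
    · exact Or.inr (Or.inr (le_antisymm h1 h))
    · exact Or.inl h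
  exact hint (hg.mem_interior_levelSet hu
    (fun h => hB (Finset.mem_union_left _ (Finset.mem_image.2 ⟨g u, hP, h.symm⟩)))
    (fun h => hB (Finset.mem_union_right _ (Finset.mem_image.2 ⟨g u, hP, h.symm⟩))))

theorem HasDerivAt.nonneg_of_monotoneOn_Icc {g : ℝ → ℝ} {g' a b u : ℝ}
    (hd : HasDerivAt g g' u) (hg : MonotoneOn g (Icc a b)) (hu : u ∈ Ioo a b) : 0 ≤ g' :=
  hd.hasDerivWithinAt.nonneg_of_monotoneOn (accPt_iff_frequently_nhdsNE.2
    (eventually_nhdsWithin_of_eventually_nhds (Icc_mem_nhds hu.1 hu.2)).frequently) hg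

section Warp

variable {s φ g₁ g₂ : ℝ → ℝ} (heq : ∀ v ∈ Icc (0:ℝ) 1, s (g₁ v) = φ (g₂ v))
include heq

theorem cdfOf_comp_eventuallyEq_of_mem_interior_levelSet (hg₂c : ContinuousOn g₂ (Icc 0 1))
    (hg₂map : MapsTo g₂ (Icc (0:ℝ) 1) (Icc (0:ℝ) 1))
    (hIφ : IntervalIntegrable (fun x => |deriv φ x|) volume 0 1) {u : ℝ}
    (hu : u ∈ interior {v ∈ Icc (0:ℝ) 1 | g₁ v = g₁ u}) :
    (fun v => cdfOf φ (g₂ v)) =ᶠ[𝓝 u] fun _ => cdfOf φ (g₂ u) := by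
  obtain ⟨ε, hε, hball⟩ := Metric.mem_nhds_iff.1 (mem_interior_iff_mem_nhds.1 hu)
  have huI : u ∈ Icc (0:ℝ) 1 := (hball (Metric.mem_ball_self hε)).1
  filter_upwards [Metric.ball_mem_nhds u hε] with v hv
  have hvI : v ∈ Icc (0:ℝ) 1 := (hball hv).1
  -- `φ` is constant between `g₂ u` and `g₂ v` since `φ ∘ g₂ = s ∘ g₁` is constant on `[[u, v]]`.
  refine cdfOf_eq_of_eqOn_uIcc hIφ (hg₂map huI) (hg₂map hvI) fun w hw => ?_
  obtain ⟨r, hr, rfl⟩ := intermediate_value_uIcc (hg₂c.mono (uIcc_subset_Icc huI hvI)) hw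
  obtain ⟨hrI, hr₁⟩ := hball ((convex_ball u ε).ordConnected.uIcc_subset
    (Metric.mem_ball_self hε) hv hr)
  rw [← heq r hrI, hr₁, heq u huI]

theorem cdfOf_comp_sub_eventuallyEq_of_mem_interior_levelSet
    (hg₁c : ContinuousOn g₁ (Icc 0 1)) (hg₂c : ContinuousOn g₂ (Icc 0 1))
    (hg₁map : MapsTo g₁ (Icc (0:ℝ) 1) (Icc (0:ℝ) 1))
    (hg₂map : MapsTo g₂ (Icc (0:ℝ) 1) (Icc (0:ℝ) 1))
    (hIs : IntervalIntegrable (fun x => |deriv s x|) volume 0 1)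
    (hIφ : IntervalIntegrable (fun x => |deriv φ x|) volume 0 1) {u : ℝ}
    (hu : u ∈ interior {v ∈ Icc (0:ℝ) 1 | g₁ v = g₁ u} ∨
      u ∈ interior {v ∈ Icc (0:ℝ) 1 | g₂ v = g₂ u}) :
    (fun v => cdfOf s (g₁ v) - cdfOf φ (g₂ v)) =ᶠ[𝓝 u]
      fun _ => cdfOf s (g₁ u) - cdfOf φ (g₂ u) := by
  have hflat : ∀ {g F : ℝ → ℝ}, u ∈ interior {v ∈ Icc (0:ℝ) 1 | g v = g u} →
      (fun v => F (g v)) =ᶠ[𝓝 u] fun _ => F (g u) := fun hu => by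
    filter_upwards [mem_interior_iff_mem_nhds.1 hu] with v hv using by rw [hv.2]
  obtain ⟨h₁, h₂⟩ : (fun v => cdfOf s (g₁ v)) =ᶠ[𝓝 u] (fun _ => cdfOf s (g₁ u)) ∧
      (fun v => cdfOf φ (g₂ v)) =ᶠ[𝓝 u] (fun _ => cdfOf φ (g₂ u)) := by
    rcases hu with hu | hu
    · exact ⟨hflat hu, cdfOf_comp_eventuallyEq_of_mem_interior_levelSet heq hg₂c hg₂map hIφ hu⟩
    · exact ⟨cdfOf_comp_eventuallyEq_of_mem_interior_levelSet (fun v hv => (heq v hv).symm)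
        hg₁c hg₁map hIs hu, hflat hu⟩
  filter_upwards [h₁, h₂] with v h₁ h₂ using by rw [h₁, h₂]

theorem abs_deriv_mul_deriv_eq_of_comp_eq {g₁' g₂' s' φ' u : ℝ} (hu : u ∈ Ioo (0:ℝ) 1)
    (hg₁m : MonotoneOn g₁ (Icc 0 1)) (hg₂m : MonotoneOn g₂ (Icc 0 1))
    (hg₁ : HasDerivAt g₁ g₁' u) (hg₂ : HasDerivAt g₂ g₂' u)
    (hs : HasDerivAt s s' (g₁ u)) (hφ : HasDerivAt φ φ' (g₂ u)) :
    |s'| * g₁' = |φ'| * g₂' := by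
  have hcomp : (fun v => s (g₁ v)) =ᶠ[𝓝 u] fun v => φ (g₂ v) := by
    filter_upwards [Icc_mem_nhds hu.1 hu.2] with v hv using heq v hv
  have hchain : s' * g₁' = φ' * g₂' :=
    ((hs.comp u hg₁).congr_of_eventuallyEq hcomp.symm).unique (hφ.comp u hg₂)
  rw [← abs_of_nonneg (hg₁.nonneg_of_monotoneOn_Icc hg₁m hu),
    ← abs_of_nonneg (hg₂.nonneg_of_monotoneOn_Icc hg₂m hu), ← abs_mul, ← abs_mul, hchain]

theorem exists_finset_hasDerivAt_cdfOf_comp_sub (hs : PiecewiseC1 s) (hφ : PiecewiseC1 φ)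
    (hIs : IntervalIntegrable (fun x => |deriv s x|) volume 0 1)
    (hIφ : IntervalIntegrable (fun x => |deriv φ x|) volume 0 1) (hg₁ : InG g₁) (hg₂ : InG g₂) :
    ∃ B : Finset ℝ, ∀ u ∈ Ioo (0:ℝ) 1 \ (B : Set ℝ), ∃ d, 0 ≤ d ∧
      HasDerivAt (fun v => cdfOf s (g₁ v) - cdfOf φ (g₂ v))
        (d * ((normD1 s)⁻¹ - (normD1 φ)⁻¹)) u := by
  obtain ⟨-, Ss, hsd, hsc⟩ := hs
  obtain ⟨-, Sφ, hφd, hφc⟩ := hφ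
  have hg₁map := hg₁.mapsTo
  have hg₂map := hg₂.mapsTo
  obtain ⟨⟨⟨hg₁c, S₁, hg₁d, -⟩, -⟩, hg₁m, -⟩ := hg₁
  obtain ⟨⟨⟨hg₂c, S₂, hg₂d, -⟩, -⟩, hg₂m, -⟩ := hg₂
  -- Off `B`, either a warp is flat near `u` or the chain rule applies to `s ∘ g₁` and `φ ∘ g₂`.
  refine ⟨S₁ ∪ S₂ ∪ levelSetEndpoints g₁ (Ss ∪ {0, 1}) ∪ levelSetEndpoints g₂ (Sφ ∪ {0, 1}),
    fun u ⟨hu, huB⟩ => ?_⟩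
  have huI : u ∈ Icc (0:ℝ) 1 := Ioo_subset_Icc_self hu
  simp only [Finset.coe_union, mem_union, Finset.mem_coe, not_or] at huB
  obtain ⟨⟨⟨hu₁, hu₂⟩, hu₁B⟩, hu₂B⟩ := huB
  by_cases flat : u ∈ interior {v ∈ Icc (0:ℝ) 1 | g₁ v = g₁ u} ∨
      u ∈ interior {v ∈ Icc (0:ℝ) 1 | g₂ v = g₂ u}
  · refine ⟨0, le_rfl, ?_⟩
    rw [zero_mul]
    exact (hasDerivAt_const u _).congr_of_eventuallyEq <|
      cdfOf_comp_sub_eventuallyEq_of_mem_interior_levelSet heq hg₁c hg₂c hg₁map hg₂map hIs hIφ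
        flat
  obtain ⟨flat₁, flat₂⟩ := not_or.1 flat
  have hsu := apply_mem_Ioo_sdiff_of_notMem_interior_levelSet hg₁m hg₁map huI flat₁ hu₁B
  have hφu := apply_mem_Ioo_sdiff_of_notMem_interior_levelSet hg₂m hg₂map huI flat₂ hu₂B
  have hd₁ := (hg₁d u ⟨huI, hu₁⟩).hasDerivAt
  have hd₂ := (hg₂d u ⟨huI, hu₂⟩).hasDerivAt
  have hcs : ContinuousAt (deriv s) (g₁ u) := hsc.continuousAt <|
    inter_mem (Icc_mem_nhds hsu.1.1 hsu.1.2) (Ss.finite_toSet.isClosed.compl_mem_nhds hsu.2)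
  have hcφ : ContinuousAt (deriv φ) (g₂ u) := hφc.continuousAt <|
    inter_mem (Icc_mem_nhds hφu.1.1 hφu.1.2) (Sφ.finite_toSet.isClosed.compl_mem_nhds hφu.2)
  have habs := abs_deriv_mul_deriv_eq_of_comp_eq heq hu hg₁m hg₂m hd₁ hd₂
    (hsd _ ⟨Ioo_subset_Icc_self hsu.1, hsu.2⟩).hasDerivAt
    (hφd _ ⟨Ioo_subset_Icc_self hφu.1, hφu.2⟩).hasDerivAt
  refine ⟨|deriv s (g₁ u)| * deriv g₁ u,
    mul_nonneg (abs_nonneg _) (hd₁.nonneg_of_monotoneOn_Icc hg₁m hu), ?_⟩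
  refine (((hasDerivAt_cdfOf hIs (hg₁map huI) hcs).comp u hd₁).sub
    ((hasDerivAt_cdfOf hIφ (hg₂map huI) hcφ).comp u hd₂)).congr_deriv ?_
  linear_combination (normD1 φ)⁻¹ * habs

theorem cdfOf_comp_eq_cdfOf_comp (hs : PiecewiseC1 s) (hφ : PiecewiseC1 φ)
    (hns : 0 < normD1 s) (hnφ : 0 < normD1 φ) (hg₁ : InG g₁) (hg₂ : InG g₂) :
    ∀ u ∈ Icc (0:ℝ) 1, cdfOf s (g₁ u) = cdfOf φ (g₂ u) := by
  have hIs := intervalIntegrable_abs_deriv_of_normD1_pos hns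
  have hIφ := intervalIntegrable_abs_deriv_of_normD1_pos hnφ
  obtain ⟨B, hB⟩ := exists_finset_hasDerivAt_cdfOf_comp_sub heq hs hφ hIs hIφ hg₁ hg₂
  have hcont : ContinuousOn (fun v => cdfOf s (g₁ v) - cdfOf φ (g₂ v)) (Icc 0 1) :=
    ((cdfOf_continuousOn hIs).comp hg₁.1.1.1 hg₁.mapsTo).sub
      ((cdfOf_continuousOn hIφ).comp hg₂.1.1.1 hg₂.mapsTo)
  obtain ⟨-, -, hg₁0, hg₁1⟩ := hg₁
  obtain ⟨-, -, hg₂0, hg₂1⟩ := hg₂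
  intro u hu
  have h := eqOn_Icc_of_hasDerivAt_mul_off_finset B hcont
    (by simp [hg₁0, hg₁1, hg₂0, hg₂1, cdfOf_zero, cdfOf_one hns, cdfOf_one hnφ]) hB u hu
  simpa [hg₁0, hg₂0, cdfOf_zero, sub_eq_zero] using h

end Warp

theorem apply_transportMap_eq_of_warpRel {s φ : ℝ → ℝ} (hs : PiecewiseC1 s)
    (hφ : PiecewiseC1 φ) (hns : 0 < normD1 s) (hnφ : 0 < normD1 φ) (h : WarpRel s φ)
    {x : ℝ} (hx : x ∈ Icc (0:ℝ) 1) : φ (transportMap s φ x) = s x := by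
  obtain ⟨g₁, g₂, hg₁, hg₂, heq⟩ := h
  have hIφ := intervalIntegrable_abs_deriv_of_normD1_pos hnφ
  obtain ⟨u, hu, rfl⟩ : ∃ u ∈ Icc (0:ℝ) 1, g₁ u = x := by
    have hivt := intermediate_value_Icc zero_le_one hg₁.1.1.1
    rw [hg₁.2.2.1, hg₁.2.2.2] at hivt
    exact hivt hx
  have hy := hg₂.mapsTo hu
  obtain ⟨hT, hFT⟩ := genInv_apply_self (cdfOf_monotoneOn hIφ) (cdfOf_continuousOn hIφ) hy
  have hTI : genInv 0 1 (cdfOf φ) (cdfOf φ (g₂ u)) ∈ Icc (0:ℝ) 1 := ⟨hy.1.trans hT.1, hT.2⟩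
  rw [transportMap, cdfOf_comp_eq_cdfOf_comp heq hs hφ hns hnφ hg₁ hg₂ u hu, heq u hu]
  obtain ⟨hφc, Sφ, hφd, -⟩ := hφ
  refine eq_of_integral_abs_deriv_eq_zero hT.1 Sφ.countable_toSet
    (hφc.mono (Icc_subset_Icc hy.1 hT.2))
    (fun w hw => hφd w ⟨⟨hy.1.trans hw.1.1.le, hw.1.2.le.trans hT.2⟩, hw.2⟩)
    (intervalIntegrable_abs_deriv_of_mem_Icc hIφ hy hTI) ?_
  have hsub := cdfOf_sub_cdfOf hIφ hy hTI
  rw [hFT, sub_self, eq_comm, mul_eq_zero] at hsub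
  exact hsub.resolve_left (inv_ne_zero hnφ.ne')

theorem dT_eq_zero_of_forall_apply_transportMap_eq {s φ : ℝ → ℝ}
    (h : ∀ x ∈ Icc (0:ℝ) 1, φ (transportMap s φ x) = s x) : dT s φ = 0 := by
  rw [dT, intervalIntegral.integral_congr (g := fun _ => 0) fun x hx => ?_]
  · simp
  · rw [uIcc_of_le zero_le_one] at hx
    simp [h x hx]

/-- if `s ∼ t₀`, then `d_T(s, t₀) = 0` and `t₀` attains the minimum of
`d_T(s, ·)` over the training samples `t₀, …, t_n`. -/
theorem dT_nearest_neighbor (n : ℕ) (s : ℝ → ℝ) (t : ℕ → ℝ → ℝ)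
    (hs : C1FF s) (hns : 0 < normD1 s)
    (ht : ∀ j ≤ n, C1FF (t j)) (hnt : ∀ j ≤ n, 0 < normD1 (t j))
    (h0 : WarpRel s (t 0)) :
    dT s (t 0) = 0 ∧ ∀ j ≤ n, dT s (t 0) ≤ dT s (t j) := by
  have hzero : dT s (t 0) = 0 := dT_eq_zero_of_forall_apply_transportMap_eq fun _ hx =>
    apply_transportMap_eq_of_warpRel hs.1 (ht 0 n.zero_le).1 hns (hnt 0 n.zero_le) h0 hx
  exact ⟨hzero, fun j _ => hzero ▸ Real.sqrt_nonneg _⟩
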